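/- Let A > 0 and Δ > 0. For N > 0 define the quartic polynomial p_N(ρ) = 144A²ρ⁴ + 48AΔρ³ + 4(Δ²−8A²N²)ρ² − 12AΔN²ρ − Δ²N². Then there is exactly one N > 0 for which p_N has a multiple root in ℂ (i.e. its discriminant vanishes), namely N = Δ·√(2·(145 + 99·3^{1/3} + 57·3^{2/3}))/(32A). -/

import Mathlib

/-!
The quartic is homogeneous: `p_N(ρ) = (Δ⁴/A²) q_n(Aρ/Δ)`, where
`q_n = 4x²(6x+1)² − n²(32x²+12x+1)` is the case `A = Δ = 1`, `n = AN/Δ`, so it suffices to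
treat `q_n`. At a double root of `q_n` the resultant of `q_n` and `q_n'` in `x` vanishes; up to
a constant it is `m (512m³ − 435m² + 24m − 1)` with `m = n²`. Writing `r = ∛3`, this cubic has
a single real root `m = (145 + 99r + 57r²)/512`, and for that `m` the point
`x = −(9 + 3r + r²)/48 = 1/(2r − 6)` is a double root of `q_n`.
-/

open Polynomial

/-- The quartic `p_N(ρ) = 144A²ρ⁴ + 48AΔρ³ + 4(Δ²−8A²N²)ρ² − 12AΔN²ρ − Δ²N²`,
regarded as a polynomial over ℂ. -/
noncomputable def evenQuartic (A Δ N : ℝ) : Polynomial ℂ :=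
  C ((144 * A ^ 2 : ℝ) : ℂ) * X ^ 4 + C ((48 * A * Δ : ℝ) : ℂ) * X ^ 3
    + C ((4 * (Δ ^ 2 - 8 * A ^ 2 * N ^ 2) : ℝ) : ℂ) * X ^ 2
    - C ((12 * A * Δ * N ^ 2 : ℝ) : ℂ) * X - C ((Δ ^ 2 * N ^ 2 : ℝ) : ℂ)

namespace Polynomial

theorem sq_dvd_iff_isRoot_and_isRoot_derivative {R : Type*} [CommRing R] (p : R[X]) (z : R) :
    (X - C z) ^ 2 ∣ p ↔ p.IsRoot z ∧ (derivative p).IsRoot z := by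
  rcases eq_or_ne p 0 with rfl | hp
  · simp
  rw [← le_rootMultiplicity_iff hp, ← one_lt_rootMultiplicity_iff_isRoot hp]
  rfl

theorem exists_sq_dvd_C_mul_comp_C_mul_X_iff {K : Type*} [Field K] (p : K[X]) {a c : K}
    (ha : a ≠ 0) (hc : c ≠ 0) :
    (∃ z, (X - C z) ^ 2 ∣ C c * p.comp (C a * X)) ↔ ∃ w, (X - C w) ^ 2 ∣ p := by
  have scaled : ∀ z, (X - C z) ^ 2 ∣ C c * p.comp (C a * X) ↔ (X - C (a * z)) ^ 2 ∣ p := by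
    intro z
    simp only [sq_dvd_iff_isRoot_and_isRoot_derivative, IsRoot.def, derivative_mul,
      derivative_C, derivative_comp, eval_mul, eval_C, eval_comp, eval_X]
    simp [ha, hc]
  simp_rw [scaled]
  exact ⟨fun ⟨z, hz⟩ ↦ ⟨_, hz⟩,
    fun ⟨w, hw⟩ ↦ ⟨a⁻¹ * w, by rwa [mul_inv_cancel_left₀ ha]⟩⟩

end Polynomial

theorem eval_evenQuartic (A Δ N : ℝ) (z : ℂ) :
    (evenQuartic A Δ N).eval z =
      144 * (A : ℂ) ^ 2 * z ^ 4 + 48 * (A : ℂ) * Δ * z ^ 3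
        + 4 * ((Δ : ℂ) ^ 2 - 8 * (A : ℂ) ^ 2 * (N : ℂ) ^ 2) * z ^ 2
        - 12 * (A : ℂ) * Δ * (N : ℂ) ^ 2 * z - (Δ : ℂ) ^ 2 * (N : ℂ) ^ 2 := by
  simp only [evenQuartic, eval_add, eval_sub, eval_mul, eval_pow, eval_C, eval_X]
  push_cast
  ring

theorem eval_derivative_evenQuartic (A Δ N : ℝ) (z : ℂ) :
    (derivative (evenQuartic A Δ N)).eval z =
      576 * (A : ℂ) ^ 2 * z ^ 3 + 144 * (A : ℂ) * Δ * z ^ 2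
        + 8 * ((Δ : ℂ) ^ 2 - 8 * (A : ℂ) ^ 2 * (N : ℂ) ^ 2) * z
        - 12 * (A : ℂ) * Δ * (N : ℂ) ^ 2 := by
  simp only [evenQuartic, derivative_sub, derivative_add, derivative_C_mul,
    derivative_X_pow, derivative_C, derivative_X, eval_add, eval_sub, eval_mul,
    eval_pow, eval_C, eval_X, eval_zero, mul_one]
  push_cast
  ring

theorem evenQuartic_eq_C_mul_comp {A Δ : ℝ} (hA : A ≠ 0) (hΔ : Δ ≠ 0) (N : ℝ) :
    evenQuartic A Δ N =
      C ((Δ : ℂ) ^ 4 / (A : ℂ) ^ 2) *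
        (evenQuartic 1 1 (A * N / Δ)).comp (C ((A : ℂ) / Δ) * X) := by
  have hA' : (A : ℂ) ≠ 0 := by exact_mod_cast hA
  have hΔ' : (Δ : ℂ) ≠ 0 := by exact_mod_cast hΔ
  refine Polynomial.funext fun z ↦ ?_
  simp only [eval_mul, eval_C, eval_comp, eval_X, eval_evenQuartic]
  push_cast
  field_simp

theorem cubic_eq_zero_of_isRoot_evenQuartic_one_one {n : ℝ} (hn : n ≠ 0) {x : ℂ}
    (h0 : (evenQuartic 1 1 n).IsRoot x) (h1 : (derivative (evenQuartic 1 1 n)).IsRoot x) :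
    512 * (n ^ 2) ^ 3 - 435 * (n ^ 2) ^ 2 + 24 * n ^ 2 - 1 = 0 := by
  simp only [IsRoot.def, eval_evenQuartic, eval_derivative_evenQuartic, Complex.ofReal_one,
    one_pow, mul_one] at h0 h1
  set m : ℂ := (n : ℂ) ^ 2 with hm
  -- Bézout certificate for the resultant of `q_n` and `q_n'` in `x`.
  have hres : m * (512 * m ^ 3 - 435 * m ^ 2 + 24 * m - 1) = 0 := by
    linear_combination
      (1 + 21 * m - 2688 * m ^ 2 + 4096 * m ^ 3 - 36 * x + 2520 * m * x - 2304 * m ^ 2 * x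
        - 576 * x ^ 2 + 20880 * m * x ^ 2 - 36864 * m ^ 2 * x ^ 2) * h0
      + (-15 / 4 * m + 1041 / 4 * m ^ 2 - 384 * m ^ 3 - 1 / 2 * x - 75 / 2 * m * x
        + 1236 * m ^ 2 * x - 2048 * m ^ 3 * x + 21 * x ^ 2 - 1065 * m * x ^ 2
        + 1344 * m ^ 2 * x ^ 2 + 144 * x ^ 3 - 5220 * m * x ^ 3 + 9216 * m ^ 2 * x ^ 3) * h1
  rw [hm] at hres
  have hres' : n ^ 2 * (512 * (n ^ 2) ^ 3 - 435 * (n ^ 2) ^ 2 + 24 * n ^ 2 - 1) = 0 := by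
    exact_mod_cast hres
  exact (mul_eq_zero.mp hres').resolve_left (pow_ne_zero 2 hn)

theorem cubic_eq_zero_iff {r : ℝ} (hr : r ^ 3 = 3) {m : ℝ} (hm : m ≠ 0) :
    512 * m ^ 3 - 435 * m ^ 2 + 24 * m - 1 = 0 ↔ 512 * m = 145 + 99 * r + 57 * r ^ 2 := by
  -- In `w = 1/m` and `t = w - 8` the cubic is `-m³ (t³ + 243t + 1944)`, whose Cardano root is
  -- `t = 3r² - 9r`; the cofactor is `a² + ab + b² + 243m²` with `a = 1 - 8m`, `b = tm`.
  set t := 3 * r ^ 2 - 9 * r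
  set R := (1 - 8 * m) ^ 2 + (1 - 8 * m) * t * m + t ^ 2 * m ^ 2 + 243 * m ^ 2
  have hfactor : 512 * m ^ 3 - 435 * m ^ 2 + 24 * m - 1 = (m * (8 + t) - 1) * R := by
    linear_combination
      (648 * m ^ 3 - 729 * m ^ 3 * r + 243 * m ^ 3 * r ^ 2 - 27 * m ^ 3 * r ^ 3) * hr
  have hR : 0 < R := by
    have : 0 < m ^ 2 := by positivity
    nlinarith [sq_nonneg (1 - 8 * m + t * m / 2), sq_nonneg (t * m)]
  have hinv : (8 + t) * (145 + 99 * r + 57 * r ^ 2) = 512 := by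
    linear_combination (-216 + 171 * r) * hr
  rw [hfactor, mul_eq_zero, or_iff_left hR.ne', sub_eq_zero]
  constructor <;> intro h
  · linear_combination (145 + 99 * r + 57 * r ^ 2) * h - m * hinv
  · linear_combination (8 + t) / 512 * h + hinv / 512

theorem sq_dvd_evenQuartic_one_one {r : ℝ} (hr : r ^ 3 = 3) {n : ℝ}
    (hn : 512 * n ^ 2 = 145 + 99 * r + 57 * r ^ 2) :
    (X - C ((-(9 + 3 * r + r ^ 2) / 48 : ℝ) : ℂ)) ^ 2 ∣ evenQuartic 1 1 n := by
  rw [sq_dvd_iff_isRoot_and_isRoot_derivative, IsRoot.def, IsRoot.def, eval_evenQuartic,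
    eval_derivative_evenQuartic]
  have hr' : (r : ℂ) ^ 3 = 3 := by exact_mod_cast hr
  have hn' : 512 * (n : ℂ) ^ 2 = 145 + 99 * r + 57 * (r : ℂ) ^ 2 := by exact_mod_cast hn
  push_cast
  constructor
  · linear_combination
      (-77 / 6144 - 53 / 4096 * (r : ℂ) - 25 / 6144 * (r : ℂ) ^ 2 + 17 / 36864 * (r : ℂ) ^ 3
        + 1 / 3072 * (r : ℂ) ^ 4 + 1 / 36864 * (r : ℂ) ^ 5) * hr'
      - (32 * ((9 + 3 * r + (r : ℂ) ^ 2) / 48) ^ 2 - 12 * ((9 + 3 * r + (r : ℂ) ^ 2) / 48) + 1)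
        / 512 * hn'
  · linear_combination
      (5 / 64 - 9 / 128 * (r : ℂ) - 3 / 64 * (r : ℂ) ^ 2 - 1 / 192 * (r : ℂ) ^ 3) * hr'
      - (12 - 64 * ((9 + 3 * r + (r : ℂ) ^ 2) / 48)) / 512 * hn'

theorem exists_sq_dvd_evenQuartic_one_one_iff {r : ℝ} (hr : r ^ 3 = 3) {n : ℝ} (hn : n ≠ 0) :
    (∃ x : ℂ, (X - C x) ^ 2 ∣ evenQuartic 1 1 n) ↔
      512 * n ^ 2 = 145 + 99 * r + 57 * r ^ 2 := by
  refine ⟨fun ⟨x, hx⟩ ↦ ?_, fun h ↦ ⟨_, sq_dvd_evenQuartic_one_one hr h⟩⟩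
  rw [sq_dvd_iff_isRoot_and_isRoot_derivative] at hx
  rw [← cubic_eq_zero_iff hr (pow_ne_zero 2 hn)]
  exact cubic_eq_zero_of_isRoot_evenQuartic_one_one hn hx.1 hx.2

theorem mul_sq_div_eq_iff_eq_mul_sqrt_div {A Δ N S : ℝ} (hA : 0 < A) (hΔ : 0 < Δ)
    (hN : 0 < N) :
    512 * (A * N / Δ) ^ 2 = S ↔ N = Δ * Real.sqrt (2 * S) / (32 * A) := by
  have hpos : 0 < 32 * A * N / Δ := by positivity
  have hsq : 512 * (A * N / Δ) ^ 2 = S ↔ 32 * A * N / Δ * (32 * A * N / Δ) = 2 * S :=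
    ⟨fun h ↦ by linear_combination 2 * h, fun h ↦ by linear_combination h / 2⟩
  rw [hsq, ← Real.sqrt_eq_iff_mul_self_eq_of_pos hpos]
  constructor <;> intro h <;> rw [h] <;> field_simp

/-- For `A, Δ > 0` there is exactly one `N > 0` for which `p_N` has a multiple
root in ℂ, namely `N = Δ√(2(145 + 99·3^{1/3} + 57·3^{2/3}))/(32A)`. -/
theorem evenQuartic_multiple_root_iff (A Δ : ℝ) (hA : 0 < A) (hΔ : 0 < Δ) :
    0 < Δ * Real.sqrt (2 * (145 + 99 * (3 : ℝ) ^ ((1 : ℝ) / 3)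
        + 57 * (3 : ℝ) ^ ((2 : ℝ) / 3))) / (32 * A) ∧
    ∀ N : ℝ, 0 < N →
      ((∃ z : ℂ, (X - C z) ^ 2 ∣ evenQuartic A Δ N) ↔
        N = Δ * Real.sqrt (2 * (145 + 99 * (3 : ℝ) ^ ((1 : ℝ) / 3)
          + 57 * (3 : ℝ) ^ ((2 : ℝ) / 3))) / (32 * A)) := by
  refine ⟨by positivity, fun N hN ↦ ?_⟩
  have hr : ((3 : ℝ) ^ ((1 : ℝ) / 3)) ^ 3 = 3 := by
    rw [one_div]
    exact_mod_cast Real.rpow_inv_natCast_pow (by norm_num : (0 : ℝ) ≤ 3) (by norm_num : 3 ≠ 0)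
  have hr2 : (3 : ℝ) ^ ((2 : ℝ) / 3) = ((3 : ℝ) ^ ((1 : ℝ) / 3)) ^ 2 := by
    rw [← Real.rpow_two, ← Real.rpow_mul (by norm_num)]
    norm_num
  have hA' : (A : ℂ) ≠ 0 := by exact_mod_cast hA.ne'
  have hΔ' : (Δ : ℂ) ≠ 0 := by exact_mod_cast hΔ.ne'
  rw [hr2, evenQuartic_eq_C_mul_comp hA.ne' hΔ.ne',
    exists_sq_dvd_C_mul_comp_C_mul_X_iff _ (div_ne_zero hA' hΔ') (by positivity),
    exists_sq_dvd_evenQuartic_one_one_iff hr (by positivity)]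
  exact mul_sq_div_eq_iff_eq_mul_sqrt_div hA hΔ hN
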